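/- arXiv:1610.08621 — 3 statements merged into one kernel-verified Lean document; each statement's English description precedes it below -/
import Mathlib

section
/- In the block Lasso setting with α ∈ (1,∞), let Ê be the equicorrelation group set, γ̂_j = ‖β̂_{(j)}‖_α, Z the n×|Ê| matrix with columns Z_j = X_{(j)}η(S_{(j)}), and ŷ = Xβ̂ the (unique) fitted value. If the null space of Z is {0}, then the block Lasso solution is unique and is given by β̂_{(j)} = 0 for j ∉ Ê and β̂_{(j)} = γ̂_j η(S_{(j)}) for j ∈ Ê with γ̂_Ê = (Z^T Z)^{-1} Z^T ŷ; moreover the number of nonzero groups of β̂ is at most min(n, J). -/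
/-!
On a group where a minimiser `c` is nonzero, the derivative of the objective in each coordinate
of the group vanishes: `Xᵀ(y - Xc)_{(j)} = n λ w_j ∇‖c_{(j)}‖_α`. The gradient of the `α`-norm
has dual `αs`-norm one, so such a group lies in `Ê`; moreover `S_{(j)}` is that gradient and
`η` inverts it up to the factor `‖c_{(j)}‖_α`, so `c_{(j)} = ‖c_{(j)}‖_α η(S_{(j)})`. Strict
convexity of the squared loss makes `Xc = ŷ` for every minimiser, hence `Z γ(c) = ŷ`, and the
injectivity of `Z` determines `γ(c)` and therefore `c`. Injectivity also gives `|Ê| ≤ n` and the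
least-squares formula for `γ̂`.
-/

open Real Matrix Function

namespace Real

theorem sign_mul_abs_self (x : ℝ) : Real.sign x * |x| = x := by
  rcases lt_trichotomy x 0 with hx | rfl | hx
  · rw [sign_of_neg hx, abs_of_neg hx]; ring
  · simp
  · rw [sign_of_pos hx, abs_of_pos hx, one_mul]

theorem sign_mul_of_pos {a : ℝ} (ha : 0 < a) (x : ℝ) : Real.sign (a * x) = Real.sign x := by
  rcases lt_trichotomy x 0 with hx | rfl | hx
  · rw [sign_of_neg hx, sign_of_neg (mul_neg_of_pos_of_neg ha hx)]
  · simp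
  · rw [sign_of_pos hx, sign_of_pos (mul_pos ha hx)]

end Real

section LpNormOn

variable {ι : Type*} (p : ℝ) (s : Finset ι) (v : ι → ℝ)

noncomputable def lpNormOn : ℝ := (∑ i ∈ s, |v i| ^ p) ^ (1 / p)

noncomputable def lpNormGrad (i : ι) : ℝ :=
  (∑ k ∈ s, |v k| ^ p) ^ (1 / p - 1) * |v i| ^ (p - 2) * v i

variable {p s v}

theorem sum_abs_rpow_pos_iff (hp : 0 < p) : 0 < ∑ i ∈ s, |v i| ^ p ↔ ∃ i ∈ s, v i ≠ 0 := by
  rw [Finset.sum_pos_iff_of_nonneg fun _ _ => rpow_nonneg (abs_nonneg _) _]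
  refine exists_congr fun i => and_congr_right fun _ => ?_
  exact ⟨fun h h0 => by simp [h0, zero_rpow hp.ne'] at h, fun h => rpow_pos_of_pos (abs_pos.2 h) _⟩

theorem lpNormOn_congr {u : ι → ℝ} (h : ∀ i ∈ s, u i = v i) : lpNormOn p s u = lpNormOn p s v :=
  congrArg (· ^ (1 / p)) (Finset.sum_congr rfl fun i hi => by rw [h i hi])

theorem lpNormOn_const_mul (hp : 0 < p) (a : ℝ) :
    lpNormOn p s (fun i => a * v i) = |a| * lpNormOn p s v := by
  simp only [lpNormOn, abs_mul, mul_rpow (abs_nonneg a) (abs_nonneg _), ← Finset.mul_sum]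
  rw [mul_rpow (rpow_nonneg (abs_nonneg a) _)
      (Finset.sum_nonneg fun _ _ => rpow_nonneg (abs_nonneg _) _),
    ← rpow_mul (abs_nonneg a), mul_one_div_cancel hp.ne', rpow_one]

theorem lpNormOn_add_le (hp : 1 ≤ p) (u : ι → ℝ) :
    lpNormOn p s (u + v) ≤ lpNormOn p s u + lpNormOn p s v :=
  Real.Lp_add_le s u v hp

theorem lpNormOn_midpoint_le (hp : 1 ≤ p) (u : ι → ℝ) :
    lpNormOn p s (fun i => (u i + v i) / 2) ≤ (lpNormOn p s u + lpNormOn p s v) / 2 := by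
  have hmid : (fun i => (u i + v i) / 2) = fun i => 1 / 2 * (u + v) i := by
    funext i; rw [Pi.add_apply]; ring
  rw [hmid, lpNormOn_const_mul (by linarith), abs_of_pos one_half_pos]
  linarith [lpNormOn_add_le hp u (s := s) (v := v)]

theorem abs_lpNormGrad (i : ι) (hp : 1 < p) :
    |lpNormGrad p s v i| = (∑ k ∈ s, |v k| ^ p) ^ (1 / p - 1) * |v i| ^ (p - 1) := by
  have hQ : 0 ≤ ∑ k ∈ s, |v k| ^ p := Finset.sum_nonneg fun _ _ => rpow_nonneg (abs_nonneg _) _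
  rw [lpNormGrad, abs_mul, abs_mul, abs_of_nonneg (rpow_nonneg hQ _),
    abs_of_nonneg (rpow_nonneg (abs_nonneg _) _), mul_assoc]
  congr 1
  rcases eq_or_ne (v i) 0 with h | h
  · simp [h, zero_rpow (by linarith : p - 1 ≠ 0)]
  · rw [← rpow_add_one (abs_pos.mpr h).ne']; ring_nf

theorem lpNormGrad_ne_zero {i : ι} (hp : 0 < p) (hi : i ∈ s) (hv : v i ≠ 0) :
    lpNormGrad p s v i ≠ 0 := by
  have hQ : 0 < ∑ k ∈ s, |v k| ^ p := (sum_abs_rpow_pos_iff hp).2 ⟨i, hi, hv⟩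
  exact mul_ne_zero (mul_ne_zero (rpow_pos_of_pos hQ _).ne'
    (rpow_pos_of_pos (abs_pos.2 hv) _).ne') hv

theorem lpNormOn_lpNormGrad {q : ℝ} (hpq : p.HolderConjugate q) (hQ : 0 < ∑ k ∈ s, |v k| ^ p) :
    lpNormOn q s (lpNormGrad p s v) = 1 := by
  have hexp : (1 / p - 1) * q = -1 := by
    have := hpq.sub_one_mul_conj
    field_simp [hpq.ne_zero]
    linear_combination -this
  have hterm : ∀ i ∈ s, |lpNormGrad p s v i| ^ q =
      (∑ k ∈ s, |v k| ^ p) ^ (-1 : ℝ) * |v i| ^ p := fun i _ => by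
    rw [abs_lpNormGrad i hpq.lt, mul_rpow (rpow_nonneg hQ.le _) (rpow_nonneg (abs_nonneg _) _),
      ← rpow_mul hQ.le, ← rpow_mul (abs_nonneg _), hexp, hpq.sub_one_mul_conj]
  rw [lpNormOn, Finset.sum_congr rfl hterm, ← Finset.mul_sum, rpow_neg_one,
    inv_mul_cancel₀ hQ.ne', one_rpow]

theorem lpNormOn_mul_sign_mul_abs_lpNormGrad_rpow {ρ : ℝ} (i : ι) (hp : 1 < p)
    (hρ : (p - 1) * ρ = 1) (hQ : 0 < ∑ k ∈ s, |v k| ^ p) :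
    lpNormOn p s v * (Real.sign (lpNormGrad p s v i) * |lpNormGrad p s v i| ^ ρ) = v i := by
  rcases eq_or_ne (v i) 0 with hv | hv
  · simp [lpNormGrad, hv]
  have hsign : Real.sign (lpNormGrad p s v i) = Real.sign (v i) :=
    sign_mul_of_pos (mul_pos (rpow_pos_of_pos hQ _) (rpow_pos_of_pos (abs_pos.2 hv) _)) _
  have hexp : (1 / p - 1) * ρ = -(1 / p) := by
    field_simp [(by linarith : p ≠ 0)]
    linear_combination -hρ
  rw [hsign, abs_lpNormGrad i hp, mul_rpow (rpow_nonneg hQ.le _) (rpow_nonneg (abs_nonneg _) _),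
    ← rpow_mul hQ.le, ← rpow_mul (abs_nonneg _), hexp, hρ, rpow_one, rpow_neg hQ.le, lpNormOn]
  calc (∑ k ∈ s, |v k| ^ p) ^ (1 / p) *
        (Real.sign (v i) * (((∑ k ∈ s, |v k| ^ p) ^ (1 / p))⁻¹ * |v i|))
      = Real.sign (v i) * |v i| := by
        field_simp [(rpow_pos_of_pos hQ (1 / p)).ne']
    _ = v i := sign_mul_abs_self _

theorem lpNormOn_add_smul_single_of_notMem [DecidableEq ι] {i : ι} (hi : i ∉ s) (t : ℝ) :
    lpNormOn p s (v + t • Pi.single i 1) = lpNormOn p s v := by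
  refine congrArg (· ^ (1 / p)) (Finset.sum_congr rfl fun k hk => ?_)
  rw [Pi.add_apply, Pi.smul_apply, Pi.single_eq_of_ne (ne_of_mem_of_not_mem hk hi), smul_zero,
    add_zero]

theorem hasDerivAt_lpNormOn_add_smul_single [DecidableEq ι] {i : ι} (hp : 1 < p) (hi : i ∈ s)
    (hQ : 0 < ∑ k ∈ s, |v k| ^ p) :
    HasDerivAt (fun t : ℝ => lpNormOn p s (v + t • Pi.single i 1)) (lpNormGrad p s v i) 0 := by
  have hinner : HasDerivAt (fun t : ℝ => ∑ k ∈ s, |(v + t • Pi.single i 1 : ι → ℝ) k| ^ p)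
      (∑ k ∈ s, p * |v k| ^ (p - 2) * v k * (Pi.single i 1 : ι → ℝ) k) 0 := by
    refine HasDerivAt.fun_sum fun k _ => ?_
    have hline : HasDerivAt (fun t : ℝ => v k + t * (Pi.single i 1 : ι → ℝ) k)
        ((Pi.single i 1 : ι → ℝ) k) 0 := by
      simpa using ((hasDerivAt_id (0 : ℝ)).mul_const ((Pi.single i 1 : ι → ℝ) k)).const_add (v k)
    simpa [Function.comp_def] using (hasDerivAt_abs_rpow (v k) hp).comp_of_eq 0 hline (by simp)
  have hsum : ∑ k ∈ s, p * |v k| ^ (p - 2) * v k * (Pi.single i 1 : ι → ℝ) k =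
      p * |v i| ^ (p - 2) * v i := by
    simp [Pi.single_apply, hi]
  rw [hsum] at hinner
  have hrpow := (Real.hasDerivAt_rpow_const (p := 1 / p) (Or.inl hQ.ne')).comp_of_eq 0 hinner
    (by simp)
  refine hrpow.congr_deriv ?_
  unfold lpNormGrad
  field_simp [(by linarith : p ≠ 0)]

end LpNormOn

theorem Finset.sum_eq_sum_sum_of_disjoint_of_cover {ι κ M : Type*} [Fintype ι] [Fintype κ]
    [AddCommMonoid M] {G : κ → Finset ι} (hdisj : Pairwise (Disjoint on G))
    (hcover : ∀ i, ∃ j, i ∈ G j) (f : ι → M) : ∑ i, f i = ∑ j, ∑ i ∈ G j, f i := by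
  classical
  have huniv : Finset.univ.biUnion G = Finset.univ :=
    Finset.eq_univ_of_forall fun i => Finset.mem_biUnion.2 <| by simpa using hcover i
  rw [← huniv, Finset.sum_biUnion fun j _ k _ hjk => hdisj hjk]

theorem hasDerivAt_sum_sq_sub_mulVec_add_smul_single {m ι : Type*} [Fintype m] [Fintype ι]
    [DecidableEq ι] (y : m → ℝ) (X : Matrix m ι ℝ) (c : ι → ℝ) (i : ι) :
    HasDerivAt (fun t : ℝ => ∑ k, (y k - (X *ᵥ (c + t • Pi.single i 1)) k) ^ 2)
      (-2 * (Xᵀ *ᵥ (y - X *ᵥ c)) i) 0 := by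
  have hline : ∀ k, HasDerivAt (fun t : ℝ => y k - (X *ᵥ c) k - t * X k i) (-X k i) 0 := fun k => by
    simpa using ((hasDerivAt_id (0 : ℝ)).mul_const (X k i)).const_sub (y k - (X *ᵥ c) k)
  have hfun : (fun t : ℝ => ∑ k, (y k - (X *ᵥ (c + t • Pi.single i 1)) k) ^ 2) =
      fun t => ∑ k, (y k - (X *ᵥ c) k - t * X k i) ^ 2 := by
    funext t
    simp [mulVec_add, mulVec_smul, sub_sub]
  rw [hfun]
  refine (HasDerivAt.fun_sum fun k _ => (hline k).fun_pow 2).congr_deriv ?_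
  simp only [mulVec, dotProduct, transpose_apply, Pi.sub_apply, Finset.mul_sum, zero_mul, sub_zero]
  refine Finset.sum_congr rfl fun k _ => ?_
  push_cast
  ring

structure IsBlockForm {ι κ : Type*} (G : κ → Finset ι) (E : Finset κ) (γ : κ → ℝ)
    (e c : ι → ℝ) : Prop where
  eq_zero : ∀ j ∉ E, ∀ i ∈ G j, c i = 0
  eq_mul : ∀ j ∈ E, ∀ i ∈ G j, c i = γ j * e i

namespace IsBlockForm

variable {ι κ : Type*} {G : κ → Finset ι} {E : Finset κ} {γ : κ → ℝ} {e c : ι → ℝ}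

theorem mulVec_eq {m : Type*} [Fintype ι] [Fintype κ] (h : IsBlockForm G E γ e c)
    (hdisj : Pairwise (Disjoint on G)) (hcover : ∀ i, ∃ j, i ∈ G j) {X : Matrix m ι ℝ}
    {Z : Matrix m E ℝ} (hZ : ∀ k j, Z k j = ∑ i ∈ G j.1, X k i * e i) :
    Z *ᵥ (fun j => γ j.1) = X *ᵥ c := by
  funext k
  calc (Z *ᵥ fun j => γ j.1) k = ∑ j : E, ∑ i ∈ G j.1, X k i * c i := by
        change ∑ j : E, Z k j * γ j.1 = _
        refine Finset.sum_congr rfl fun j _ => ?_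
        rw [hZ, Finset.sum_mul]
        refine Finset.sum_congr rfl fun i hi => ?_
        rw [h.eq_mul j.1 j.2 i hi]
        ring
    _ = ∑ j, ∑ i ∈ G j, X k i * c i := by
      rw [Finset.sum_coe_sort E fun j => ∑ i ∈ G j, X k i * c i]
      refine Finset.sum_subset (Finset.subset_univ E) fun j _ hj => ?_
      exact Finset.sum_eq_zero fun i hi => by rw [h.eq_zero j hj i hi, mul_zero]
    _ = (X *ᵥ c) k :=
      (Finset.sum_eq_sum_sum_of_disjoint_of_cover hdisj hcover _).symm

theorem eq_of_eqOn (hcover : ∀ i, ∃ j, i ∈ G j) {γ' : κ → ℝ} {c' : ι → ℝ}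
    (h : IsBlockForm G E γ e c) (h' : IsBlockForm G E γ' e c') (hγ : ∀ j ∈ E, γ j = γ' j) :
    c = c' := by
  funext i
  obtain ⟨j, hij⟩ := hcover i
  by_cases hj : j ∈ E
  · rw [h.eq_mul j hj i hij, h'.eq_mul j hj i hij, hγ j hj]
  · rw [h.eq_zero j hj i hij, h'.eq_zero j hj i hij]

theorem filter_subset [Fintype κ] [DecidablePred fun j => ∃ i ∈ G j, c i ≠ 0]
    (h : IsBlockForm G E γ e c) : Finset.univ.filter (fun j => ∃ i ∈ G j, c i ≠ 0) ⊆ E :=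
  fun j hj => by
    obtain ⟨i, hi, hci⟩ := (Finset.mem_filter.1 hj).2
    by_contra hjE
    exact hci (h.eq_zero j hjE i hi)

end IsBlockForm

section BlockLasso

variable {n : ℕ} {ι κ : Type*} [Fintype ι] [Fintype κ]

noncomputable def blockLasso (y : Fin n → ℝ) (X : Matrix (Fin n) ι ℝ) (lam : ℝ) (w : κ → ℝ)
    (G : κ → Finset ι) (α : ℝ) (β : ι → ℝ) : ℝ :=
  (1 / (2 * n)) * ∑ k, (y k - X.mulVec β k) ^ 2 + lam * ∑ j, w j * lpNormOn α (G j) β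

variable {y : Fin n → ℝ} {X : Matrix (Fin n) ι ℝ} {lam : ℝ} {w : κ → ℝ} {G : κ → Finset ι}
  {α : ℝ} {c : ι → ℝ}

theorem blockLasso_stationary [DecidableEq ι] (hdisj : Pairwise (Disjoint on G)) (hα : 1 < α)
    (hc : IsMinOn (blockLasso y X lam w G α) Set.univ c) {i : ι} {j : κ} (hi : i ∈ G j)
    (hQ : 0 < ∑ k ∈ G j, |c k| ^ α) :
    (n : ℝ)⁻¹ * (Xᵀ *ᵥ (y - X *ᵥ c)) i = lam * w j * lpNormGrad α (G j) c i := by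
  classical
  set e : ι → ℝ := Pi.single i 1
  have hpen : ∀ t : ℝ, ∑ j', w j' * lpNormOn α (G j') (c + t • e) =
      w j * lpNormOn α (G j) (c + t • e) +
        ∑ j' ∈ Finset.univ.erase j, w j' * lpNormOn α (G j') c := fun t => by
    rw [← Finset.add_sum_erase _ _ (Finset.mem_univ j)]
    refine congrArg _ (Finset.sum_congr rfl fun j' hj' => ?_)
    rw [lpNormOn_add_smul_single_of_notMem
      (Finset.disjoint_right.1 (hdisj (Finset.ne_of_mem_erase hj')) hi)]
  have hderiv : HasDerivAt (fun t : ℝ => blockLasso y X lam w G α (c + t • e))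
      (1 / (2 * n) * (-2 * (Xᵀ *ᵥ (y - X *ᵥ c)) i) + lam * (w j * lpNormGrad α (G j) c i)) 0 := by
    simp only [blockLasso, hpen]
    exact ((hasDerivAt_sum_sq_sub_mulVec_add_smul_single y X c i).const_mul _).add
      ((((hasDerivAt_lpNormOn_add_smul_single hα hi hQ).const_mul (w j)).add_const _).const_mul lam)
  have hmin : IsLocalMin (fun t : ℝ => blockLasso y X lam w G α (c + t • e)) 0 :=
    Filter.Eventually.of_forall fun t => by simpa using hc (Set.mem_univ (c + t • e))
  have h0 := hmin.hasDerivAt_eq_zero hderiv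
  field_simp at h0 ⊢
  linear_combination -h0

-- With `n = 0` the loss carries the junk factor `1 / 0 = 0`, so stationarity forces every group
-- of a minimiser to vanish.
theorem pos_of_isMinOn_blockLasso [DecidableEq ι] (hdisj : Pairwise (Disjoint on G))
    (hα : 1 < α) (hlam : 0 < lam) (hw : ∀ j, 0 < w j)
    (hc : IsMinOn (blockLasso y X lam w G α) Set.univ c) {i : ι} {j : κ} (hi : i ∈ G j)
    (hci : c i ≠ 0) : 0 < n := by
  have hQ := (sum_abs_rpow_pos_iff (p := α) (by linarith)).2 ⟨i, hi, hci⟩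
  refine Nat.pos_of_ne_zero fun hn => ?_
  have h := blockLasso_stationary hdisj hα hc hi hQ
  rw [show ((n : ℝ))⁻¹ = 0 by simp [hn], zero_mul, eq_comm] at h
  exact mul_ne_zero (mul_ne_zero hlam.ne' (hw j).ne') (lpNormGrad_ne_zero (by linarith) hi hci) h

theorem mulVec_transpose_sub_eq_of_isMinOn_blockLasso [DecidableEq ι]
    (hdisj : Pairwise (Disjoint on G)) (hα : 1 < α) (hlam : 0 < lam) (hw : ∀ j, 0 < w j)
    (hc : IsMinOn (blockLasso y X lam w G α) Set.univ c) {i i' : ι} {j : κ} (hi : i ∈ G j)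
    (hci : c i ≠ 0) (hi' : i' ∈ G j) :
    (Xᵀ *ᵥ (y - X *ᵥ c)) i' = n * lam * w j * lpNormGrad α (G j) c i' := by
  have hn : (0 : ℝ) < n := Nat.cast_pos.2 (pos_of_isMinOn_blockLasso hdisj hα hlam hw hc hi hci)
  have h := blockLasso_stationary hdisj hα hc hi'
    ((sum_abs_rpow_pos_iff (p := α) (by linarith)).2 ⟨i, hi, hci⟩)
  field_simp at h
  rw [h]

theorem lpNormOn_mulVec_transpose_sub_div_eq_of_isMinOn_blockLasso [DecidableEq ι]
    (hdisj : Pairwise (Disjoint on G)) {αs : ℝ} (hα : α.HolderConjugate αs) (hlam : 0 < lam)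
    (hw : ∀ j, 0 < w j) (hc : IsMinOn (blockLasso y X lam w G α) Set.univ c) {i : ι} {j : κ}
    (hi : i ∈ G j) (hci : c i ≠ 0) :
    lpNormOn αs (G j) (Xᵀ *ᵥ (y - X *ᵥ c)) / (w j * n) = lam := by
  have hQ := (sum_abs_rpow_pos_iff (p := α) hα.pos).2 ⟨i, hi, hci⟩
  have hn : (0 : ℝ) < n :=
    Nat.cast_pos.2 (pos_of_isMinOn_blockLasso hdisj hα.lt hlam hw hc hi hci)
  rw [lpNormOn_congr (v := fun i' => (n * lam * w j : ℝ) * lpNormGrad α (G j) c i')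
      fun i' hi' => mulVec_transpose_sub_eq_of_isMinOn_blockLasso hdisj hα.lt hlam hw hc hi hci hi',
    lpNormOn_const_mul hα.symm.pos, lpNormOn_lpNormGrad hα hQ, mul_one,
    abs_of_pos (by have := hw j; positivity)]
  field_simp [(hw j).ne']

theorem eq_lpNormOn_mul_sign_of_isMinOn_blockLasso [DecidableEq ι]
    (hdisj : Pairwise (Disjoint on G)) (hα : 1 < α) {ρ : ℝ} (hρ : (α - 1) * ρ = 1)
    (hlam : 0 < lam) (hw : ∀ j, 0 < w j) (hc : IsMinOn (blockLasso y X lam w G α) Set.univ c)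
    {j : κ} {S : ι → ℝ} (hS : ∀ i ∈ G j, S i = (n * lam * w j)⁻¹ * (Xᵀ *ᵥ (y - X *ᵥ c)) i)
    {i : ι} (hi : i ∈ G j) :
    c i = lpNormOn α (G j) c * (Real.sign (S i) * |S i| ^ ρ) := by
  by_cases hzero : ∀ i' ∈ G j, c i' = 0
  · have hnorm : lpNormOn α (G j) c = 0 := by
      rw [lpNormOn_congr (v := 0) hzero]
      simp [lpNormOn, zero_rpow (by linarith : α ≠ 0), (by linarith : α ≠ 0)]
    rw [hzero i hi, hnorm, zero_mul]
  push Not at hzero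
  obtain ⟨i₀, hi₀, hci₀⟩ := hzero
  have hn : (0 : ℝ) < n :=
    Nat.cast_pos.2 (pos_of_isMinOn_blockLasso hdisj hα hlam hw hc hi₀ hci₀)
  have hSi : S i = lpNormGrad α (G j) c i := by
    rw [hS i hi, mulVec_transpose_sub_eq_of_isMinOn_blockLasso hdisj hα hlam hw hc hi₀ hci₀ hi]
    field_simp [(hw j).ne', hlam.ne']
  rw [hSi, lpNormOn_mul_sign_mul_abs_lpNormGrad_rpow i hα hρ
    ((sum_abs_rpow_pos_iff (by linarith)).2 ⟨i₀, hi₀, hci₀⟩)]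

theorem isBlockForm_of_isMinOn_blockLasso [DecidableEq ι] (hdisj : Pairwise (Disjoint on G))
    {αs ρ : ℝ} (hα : α.HolderConjugate αs) (hρ : (α - 1) * ρ = 1) (hlam : 0 < lam)
    (hw : ∀ j, 0 < w j) (hc : IsMinOn (blockLasso y X lam w G α) Set.univ c) {E : Finset κ}
    (hE : ∀ j, lpNormOn αs (G j) (Xᵀ *ᵥ (y - X *ᵥ c)) / (w j * n) = lam → j ∈ E) {S : ι → ℝ}
    (hS : ∀ j, ∀ i ∈ G j, S i = (n * lam * w j)⁻¹ * (Xᵀ *ᵥ (y - X *ᵥ c)) i) :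
    IsBlockForm G E (fun j => lpNormOn α (G j) c) (fun i => Real.sign (S i) * |S i| ^ ρ) c where
  eq_zero j hj _ hi := by_contra fun hci => hj <| hE j <|
    lpNormOn_mulVec_transpose_sub_div_eq_of_isMinOn_blockLasso hdisj hα hlam hw hc hi hci
  eq_mul j _ _ hi :=
    eq_lpNormOn_mul_sign_of_isMinOn_blockLasso hdisj hα.lt hρ hlam hw hc (hS j) hi

theorem blockLasso_midpoint_le (hlam : 0 ≤ lam) (hw : ∀ j, 0 ≤ w j) (hα : 1 ≤ α)
    (u v : ι → ℝ) :
    blockLasso y X lam w G α (fun i => (u i + v i) / 2) ≤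
      (blockLasso y X lam w G α u + blockLasso y X lam w G α v) / 2 -
        1 / (8 * n) * ∑ k, ((X *ᵥ u) k - (X *ᵥ v) k) ^ 2 := by
  have hloss : ∑ k, (y k - (X *ᵥ fun i => (u i + v i) / 2) k) ^ 2 =
      (∑ k, (y k - (X *ᵥ u) k) ^ 2 + ∑ k, (y k - (X *ᵥ v) k) ^ 2) / 2 -
        (∑ k, ((X *ᵥ u) k - (X *ᵥ v) k) ^ 2) / 4 := by
    have hmid : (X *ᵥ fun i => (u i + v i) / 2) = (1 / 2 : ℝ) • (X *ᵥ u + X *ᵥ v) := by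
      rw [← mulVec_add, ← mulVec_smul]
      congr 1
      funext i
      simp only [Pi.smul_apply, Pi.add_apply, smul_eq_mul]
      ring
    simp only [hmid, ← Finset.sum_add_distrib, Finset.sum_div, ← Finset.sum_sub_distrib]
    refine Finset.sum_congr rfl fun k _ => ?_
    simp only [Pi.smul_apply, Pi.add_apply, smul_eq_mul]
    ring
  have hpen : ∑ j, w j * lpNormOn α (G j) (fun i => (u i + v i) / 2) ≤
      (∑ j, w j * lpNormOn α (G j) u + ∑ j, w j * lpNormOn α (G j) v) / 2 := by
    rw [← Finset.sum_add_distrib, Finset.sum_div]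
    refine Finset.sum_le_sum fun j _ => ?_
    calc w j * lpNormOn α (G j) (fun i => (u i + v i) / 2)
        ≤ w j * ((lpNormOn α (G j) u + lpNormOn α (G j) v) / 2) :=
          mul_le_mul_of_nonneg_left (lpNormOn_midpoint_le hα u) (hw j)
      _ = _ := by ring
  have := mul_le_mul_of_nonneg_left hpen hlam
  simp only [blockLasso, hloss]
  have h8 : (1 : ℝ) / (8 * n) = 1 / (2 * n) / 4 := by rw [div_div]; ring_nf
  rw [h8]
  linarith

theorem mulVec_eq_of_isMinOn_blockLasso (hlam : 0 ≤ lam) (hw : ∀ j, 0 ≤ w j) (hα : 1 ≤ α)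
    {u v : ι → ℝ} (hu : IsMinOn (blockLasso y X lam w G α) Set.univ u)
    (hv : IsMinOn (blockLasso y X lam w G α) Set.univ v) : X *ᵥ u = X *ᵥ v := by
  rcases Nat.eq_zero_or_pos n with rfl | hn
  · exact Subsingleton.elim _ _
  have hsq := blockLasso_midpoint_le (y := y) (X := X) (G := G) hlam hw hα u v
  have huv := isMinOn_univ_iff.1 hu v
  have hvu := isMinOn_univ_iff.1 hv u
  have hum := isMinOn_univ_iff.1 hu fun i => (u i + v i) / 2
  have hgap : ∑ k, ((X *ᵥ u) k - (X *ᵥ v) k) ^ 2 ≤ 0 := by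
    have h8 : (0 : ℝ) < 1 / (8 * n) := by positivity
    nlinarith
  funext k
  exact sub_eq_zero.1 <| pow_eq_zero_iff two_ne_zero |>.1 <|
    (Finset.sum_eq_zero_iff_of_nonneg fun _ _ => sq_nonneg _).1
      (le_antisymm hgap (Finset.sum_nonneg fun _ _ => sq_nonneg _)) k (Finset.mem_univ k)

end BlockLasso

theorem Matrix.card_le_card_of_injective_mulVec {m n R : Type*} [Fintype m] [Fintype n]
    [Field R] {Z : Matrix m n R} (hZ : Injective Z.mulVec) :
    Fintype.card n ≤ Fintype.card m := by
  simpa using LinearMap.finrank_le_finrank_of_injective (f := Z.mulVecLin) hZ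

theorem Matrix.isUnit_transpose_mul_self_of_injective {m n R : Type*} [Fintype m] [Fintype n]
    [DecidableEq n] [Field R] [LinearOrder R] [IsStrictOrderedRing R] {Z : Matrix m n R}
    (hZ : Injective Z.mulVec) : IsUnit (Zᵀ * Z) := by
  rw [← mulVec_injective_iff_isUnit]
  have hker : LinearMap.ker (Zᵀ * Z).mulVecLin = ⊥ := by
    rw [ker_mulVecLin_transpose_mul_self, LinearMap.ker_eq_bot]
    exact hZ
  exact LinearMap.ker_eq_bot.1 hker

theorem Matrix.inv_transpose_mul_self_mul_transpose_mulVec {m n R : Type*} [Fintype m]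
    [Fintype n] [DecidableEq n] [Field R] [LinearOrder R] [IsStrictOrderedRing R]
    {Z : Matrix m n R} (hZ : Injective Z.mulVec) (v : n → R) :
    ((Zᵀ * Z)⁻¹ * Zᵀ) *ᵥ (Z *ᵥ v) = v := by
  rw [mulVec_mulVec, Matrix.mul_assoc,
    nonsing_inv_mul _ ((isUnit_iff_isUnit_det _).1 (isUnit_transpose_mul_self_of_injective hZ)),
    one_mulVec]

/-- if the matrix `Z` (columns `Z_j = X_{(j)}η(S_{(j)})`, `j ∈ Ê`)
has trivial null space, then the block Lasso solution is unique, vanishes off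
`Ê`, satisfies `β̂_{(j)} = γ̂_j η(S_{(j)})` with `γ̂_Ê = (ZᵀZ)⁻¹Zᵀŷ`, and has at
most `min(n,J)` nonzero groups. -/
theorem blockLasso_unique_of_null_triv (n p J : ℕ) (y : Fin n → ℝ)
    (X : Matrix (Fin n) (Fin p) ℝ) (lam : ℝ) (hlam : 0 < lam)
    (w : Fin J → ℝ) (hw : ∀ j, 0 < w j)
    (G : Fin J → Finset (Fin p))
    (hdisj : ∀ j k, j ≠ k → Disjoint (G j) (G k))
    (hcover : ∀ i, ∃ j, i ∈ G j)
    (wf : Fin p → ℝ) (hwf : ∀ j, ∀ i ∈ G j, wf i = w j)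
    (α αs ρ : ℝ) (hα : 1 < α) (hconj : 1 / α + 1 / αs = 1) (hρ : ρ = αs / α)
    (L : (Fin p → ℝ) → ℝ)
    (hL : ∀ β, L β = (1 / (2 * n)) * ∑ k, (y k - X.mulVec β k) ^ 2 +
        lam * ∑ j, w j * (∑ i ∈ G j, |β i| ^ α) ^ (1 / α))
    (b : Fin p → ℝ) (hb : ∀ β, L b ≤ L β)
    (yhat : Fin n → ℝ) (hyhat : yhat = X.mulVec b)
    (S : Fin p → ℝ)
    (hS : ∀ i, S i = (n * lam * wf i)⁻¹ * (X.transpose.mulVec (y - X.mulVec b)) i)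
    (Ehat : Finset (Fin J))
    (hE : Ehat = Finset.univ.filter (fun j =>
        (∑ i ∈ G j, |(X.transpose.mulVec (y - X.mulVec b)) i| ^ αs) ^ (1 / αs)
          / (w j * n) = lam))
    (γ : Fin J → ℝ) (hγ : ∀ j, γ j = (∑ i ∈ G j, |b i| ^ α) ^ (1 / α))
    (Z : Matrix (Fin n) {j // j ∈ Ehat} ℝ)
    (hZ : ∀ k (j : {j // j ∈ Ehat}),
        Z k j = ∑ i ∈ G j.1, X k i * (Real.sign (S i) * |S i| ^ ρ))
    (hnull : ∀ c : {j // j ∈ Ehat} → ℝ, Z.mulVec c = 0 → c = 0) :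
    (∀ b' : Fin p → ℝ, (∀ β, L b' ≤ L β) → b' = b) ∧
    (∀ j ∉ Ehat, ∀ i ∈ G j, b i = 0) ∧
    (∀ j ∈ Ehat, ∀ i ∈ G j, b i = γ j * (Real.sign (S i) * |S i| ^ ρ)) ∧
    ((fun j : {j // j ∈ Ehat} => γ j.1) =
        ((Z.transpose * Z)⁻¹ * Z.transpose).mulVec yhat) ∧
    (Finset.univ.filter (fun j => ∃ i ∈ G j, b i ≠ 0)).card ≤ min n J := by
  classical
  obtain rfl : L = blockLasso y X lam w G α := funext hL
  have hG : Pairwise (Disjoint on G) := fun j k h => hdisj j k h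
  have hpq : α.HolderConjugate αs :=
    Real.holderConjugate_iff.2 ⟨hα, by simpa only [one_div] using hconj⟩
  have hρ' : (α - 1) * ρ = 1 := by
    rw [hρ, mul_div_assoc', hpq.sub_one_mul_conj, div_self hpq.ne_zero]
  have hbmin := isMinOn_univ_iff.2 hb
  have hfit : ∀ c, IsMinOn (blockLasso y X lam w G α) Set.univ c → X *ᵥ c = yhat :=
    fun c hc => hyhat ▸ mulVec_eq_of_isMinOn_blockLasso hlam.le (fun j => (hw j).le) hα.le hc hbmin
  have hform : ∀ c, IsMinOn (blockLasso y X lam w G α) Set.univ c →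
      IsBlockForm G Ehat (fun j => lpNormOn α (G j) c) (fun i => Real.sign (S i) * |S i| ^ ρ) c :=
    fun c hc => isBlockForm_of_isMinOn_blockLasso hG hpq hρ' hlam hw hc
      (fun j hj => by
        rw [hE, Finset.mem_filter, ← hyhat, ← hfit c hc]
        exact ⟨Finset.mem_univ j, hj⟩)
      (fun j i hi => by rw [hS, hwf j i hi, hfit c hc, hyhat])
  have hZc : ∀ c, IsMinOn (blockLasso y X lam w G α) Set.univ c →
      Z *ᵥ (fun j => lpNormOn α (G j.1) c) = yhat :=
    fun c hc => ((hform c hc).mulVec_eq hG hcover hZ).trans (hfit c hc)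
  have hZinj : Injective Z.mulVec := fun u v h =>
    sub_eq_zero.1 (hnull _ (by rw [mulVec_sub, h, sub_self]))
  refine ⟨fun b' hb'min => ?_, (hform b hbmin).eq_zero,
    fun j hj i hi => hγ j ▸ (hform b hbmin).eq_mul j hj i hi, ?_, ?_⟩
  · have hc := isMinOn_univ_iff.2 hb'min
    exact (hform b' hc).eq_of_eqOn hcover (hform b hbmin) fun j hj =>
      congrFun (hZinj ((hZc b' hc).trans (hZc b hbmin).symm)) ⟨j, hj⟩
  · rw [← hZc b hbmin, ← inv_transpose_mul_self_mul_transpose_mulVec hZinj fun j => γ j.1]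
    exact congrArg _ (congrArg _ (funext fun j => hγ j))
  · refine le_min ((Finset.card_le_card (hform b hbmin).filter_subset).trans ?_)
      ((Finset.card_filter_le _ _).trans_eq (Finset.card_fin J))
    simpa using card_le_card_of_injective_mulVec hZinj
end

section
/- (Simple example, probability of active set {1}) Let n = 2, p = 3, groups G_1 = {1,2}, G_2 = {3}, α = 2, X/√2 = [[1,0,1],[0,1,1]], β_0 = 0, ε ~ N_2(0, σ²I_2), W = I_3, λ > 0. Then the probability that the group Lasso solution has exactly group 1 active equals (1/2)·exp(−λ²/σ²). -/
/-!
Write `y = e / √2`, `v = (β₁, β₂)`, `s = β₃` and `w = (1, 1)`, so that the objective is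
`‖y - v - s w‖² / 2 + λ (‖v‖ + |s|)`. A point `(u, 0)` with `u ≠ 0` minimizes it iff `y - u` is
a subgradient certificate: `y - u = λ u / ‖u‖` and `|⟪y - u, w⟫| ≤ λ`. The first condition is
group soft-thresholding, `u = (1 - λ / ‖y‖) y` with `‖y‖ > λ`; the second then reads
`|y₁ + y₂| ≤ ‖y‖`, i.e. `y₁ y₂ ≤ 0`. So the event is `{‖ε‖ > √2 λ} ∩ {ε₁ ε₂ ≤ 0}`, and in polar
coordinates its Gaussian mass factors as the radial tail `exp (-λ² / σ²)` times the angular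
fraction `1 / 2`.
-/

open Real MeasureTheory Set Filter Topology
open scoped RealInnerProductSpace

lemma le_of_forall_pos_le_add_mul {a b c : ℝ} (h : ∀ t > 0, a ≤ b + c * t) : a ≤ b := by
  have hlim : Tendsto (fun t => b + c * t) (𝓝[>] 0) (𝓝 b) := by
    have : Continuous fun t : ℝ => b + c * t := by fun_prop
    simpa using (this.tendsto 0).mono_left nhdsWithin_le_nhds
  exact ge_of_tendsto hlim (eventually_nhdsWithin_of_forall h)

namespace GroupLasso

variable {E : Type*} [NormedAddCommGroup E] [InnerProductSpace ℝ E]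

noncomputable def objective (lam : ℝ) (w y v : E) (s : ℝ) : ℝ :=
  ‖y - v - s • w‖ ^ 2 / 2 + lam * (‖v‖ + |s|)

lemma norm_sub_smul_sq (r w : E) (s : ℝ) :
    ‖r - s • w‖ ^ 2 = ‖r‖ ^ 2 - 2 * s * ⟪r, w⟫ + s ^ 2 * ‖w‖ ^ 2 := by
  rw [norm_sub_sq_real, inner_smul_right, norm_smul, mul_pow, Real.norm_eq_abs, sq_abs]
  ring

lemma abs_inner_le_of_forall_objective_le {lam : ℝ} {w y u : E}
    (h : ∀ s, objective lam w y u 0 ≤ objective lam w y u s) : |⟪y - u, w⟫| ≤ lam := by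
  have key : ∀ s, s * ⟪y - u, w⟫ ≤ lam * |s| + s ^ 2 * ‖w‖ ^ 2 / 2 := fun s => by
    have := h s
    simp only [objective, zero_smul, sub_zero, abs_zero, add_zero, norm_sub_smul_sq] at this
    linarith
  refine abs_le.2 ⟨?_, ?_⟩ <;> refine le_of_forall_pos_le_add_mul (c := ‖w‖ ^ 2 / 2) fun t ht => ?_
  · have := key (-t)
    rw [abs_neg, abs_of_pos ht] at this
    nlinarith
  · have := key t
    rw [abs_of_pos ht] at this
    nlinarith

/-- Group soft-thresholding. Comparing `u` with `0` gives `lam < ‖y‖`, with the point of norm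
`‖u‖` on the ray through `y` gives equality in Cauchy–Schwarz, and with `(1 - lam / ‖y‖) • y`
pins down `‖u‖`. -/
lemma lt_norm_and_eq_smul_of_forall_le {lam : ℝ} {y u : E} (hlam : 0 ≤ lam) (hu : u ≠ 0)
    (h : ∀ v, ‖y - u‖ ^ 2 / 2 + lam * ‖u‖ ≤ ‖y - v‖ ^ 2 / 2 + lam * ‖v‖) :
    lam < ‖y‖ ∧ u = (1 - lam / ‖y‖) • y := by
  have hρ : 0 < ‖u‖ := norm_pos_iff.2 hu
  have hCS := real_inner_le_norm y u
  have h_zero := h 0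
  rw [norm_sub_sq_real] at h_zero
  simp only [sub_zero, norm_zero, mul_zero, add_zero] at h_zero
  have hlt : lam < ‖y‖ := by nlinarith
  have hy : 0 < ‖y‖ := hlam.trans_lt hlt
  have on_ray : ∀ t, 0 ≤ t → ‖y - (t / ‖y‖) • y‖ ^ 2 / 2 + lam * ‖(t / ‖y‖) • y‖
      = ‖y‖ ^ 2 / 2 - t * ‖y‖ + t ^ 2 / 2 + lam * t := fun t ht => by
    rw [norm_sub_sq_real, inner_smul_right, real_inner_self_eq_norm_sq, norm_smul,
      Real.norm_eq_abs, abs_div, abs_of_nonneg ht, abs_of_pos hy]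
    field_simp
  have h_same_norm := h ((‖u‖ / ‖y‖) • y)
  rw [on_ray _ hρ.le, norm_sub_sq_real] at h_same_norm
  have hinner : ⟪y, u⟫ = ‖y‖ * ‖u‖ := le_antisymm hCS (by linarith)
  have h_soft := h (((‖y‖ - lam) / ‖y‖) • y)
  rw [on_ray _ (by linarith), norm_sub_sq_real, hinner] at h_soft
  have hρeq : ‖u‖ = ‖y‖ - lam := by nlinarith [sq_nonneg (‖u‖ - (‖y‖ - lam))]
  have hpar := inner_eq_norm_mul_iff_real.1 hinner
  rw [hρeq] at hpar
  refine ⟨hlt, ?_⟩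
  calc u = ‖y‖⁻¹ • (‖y‖ • u) := by rw [smul_smul, inv_mul_cancel₀ hy.ne', one_smul]
    _ = (1 - lam / ‖y‖) • y := by rw [← hpar, smul_smul]; congr 1; field_simp

variable {lam : ℝ} {w y : E}

/-- The KKT conditions: `(y - u) / lam` is a subgradient of `‖·‖` at `u`, and its component
along `w` one of `|·|` at `0`. -/
lemma objective_le_of_subgradient {u : E} (hu : ⟪y - u, u⟫ = lam * ‖u‖)
    (hr : ‖y - u‖ ≤ lam) (hw : |⟪y - u, w⟫| ≤ lam) (v : E) (s : ℝ) :
    objective lam w y u 0 ≤ objective lam w y v s := by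
  have expand : y - v - s • w = (y - u) - ((v - u) + s • w) := by abel
  have hv : ⟪y - u, v⟫ ≤ lam * ‖v‖ :=
    (real_inner_le_norm _ _).trans (mul_le_mul_of_nonneg_right hr (norm_nonneg v))
  have hs : s * ⟪y - u, w⟫ ≤ lam * |s| := by
    calc s * ⟪y - u, w⟫ ≤ |s| * |⟪y - u, w⟫| := by rw [← abs_mul]; exact le_abs_self _
      _ ≤ lam * |s| := by rw [mul_comm]; exact mul_le_mul_of_nonneg_right hw (abs_nonneg s)
  simp only [objective, zero_smul, sub_zero, abs_zero, add_zero]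
  rw [expand, norm_sub_sq_real (y - u), inner_add_right, inner_sub_right, inner_smul_right]
  nlinarith [sq_nonneg ‖(v - u) + s • w‖]

theorem exists_ne_zero_forall_objective_le_iff (hlam : 0 < lam) :
    (∃ u ≠ 0, ∀ v s, objective lam w y u 0 ≤ objective lam w y v s) ↔
      lam < ‖y‖ ∧ |⟪y, w⟫| ≤ ‖y‖ := by
  have residual : ∀ c : ℝ, y - (1 - c) • y = c • y := fun c => by
    rw [sub_smul, one_smul, sub_sub_cancel]
  constructor
  · rintro ⟨u, hu, hmin⟩
    obtain ⟨hlt, rfl⟩ := lt_norm_and_eq_smul_of_forall_le hlam.le hu fun v => by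
      simpa [objective] using hmin v 0
    have hy : 0 < ‖y‖ := hlam.trans hlt
    have hw := abs_inner_le_of_forall_objective_le (hmin _)
    rw [residual, real_inner_smul_left, abs_mul, abs_of_pos (div_pos hlam hy),
      div_mul_eq_mul_div, div_le_iff₀ hy] at hw
    exact ⟨hlt, le_of_mul_le_mul_left hw hlam⟩
  · rintro ⟨hlt, hw⟩
    have hy : 0 < ‖y‖ := hlam.trans hlt
    have hc : 0 < 1 - lam / ‖y‖ := by rw [sub_pos, div_lt_one hy]; exact hlt
    refine ⟨(1 - lam / ‖y‖) • y, smul_ne_zero hc.ne' (norm_pos_iff.1 hy),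
      objective_le_of_subgradient ?_ ?_ ?_⟩ <;>
      simp only [residual, real_inner_smul_left, real_inner_smul_right, real_inner_self_eq_norm_sq,
        norm_smul, Real.norm_eq_abs, abs_mul, abs_of_pos hc, abs_of_pos (div_pos hlam hy)]
    · field_simp
    · rw [div_mul_cancel₀ _ hy.ne']
    · rw [div_mul_eq_mul_div, div_le_iff₀ hy]
      exact mul_le_mul_of_nonneg_left hw hlam.le

end GroupLasso

lemma abs_inner_one_one_le_norm_iff (y : EuclideanSpace ℝ (Fin 2)) :
    |⟪y, !₂[1, 1]⟫| ≤ ‖y‖ ↔ y 0 * y 1 ≤ 0 := by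
  rw [← sq_le_sq₀ (abs_nonneg _) (norm_nonneg _), sq_abs, EuclideanSpace.real_norm_sq_eq]
  simp only [EuclideanSpace.inner_eq_star_dotProduct, dotProduct, Pi.star_apply, star_trivial,
    Fin.sum_univ_two, Fin.isValue, Matrix.cons_val_zero, one_mul, Matrix.cons_val_one,
    Matrix.cons_val_fin_one]
  constructor <;> intro h <;> nlinarith

lemma exists_minimizer_fin_three_iff {f : (Fin 3 → ℝ) → ℝ}
    {g : EuclideanSpace ℝ (Fin 2) → ℝ → ℝ} (hfg : ∀ β, f β = g !₂[β 0, β 1] (β 2)) :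
    (∃ b, (∀ β, f b ≤ f β) ∧ (b 0 ≠ 0 ∨ b 1 ≠ 0) ∧ b 2 = 0) ↔ ∃ u ≠ 0, ∀ v s, g u 0 ≤ g v s := by
  have eta : ∀ v : EuclideanSpace ℝ (Fin 2), !₂[v 0, v 1] = v := fun v => by
    ext i; fin_cases i <;> rfl
  constructor
  · rintro ⟨b, hmin, hb, hb2⟩
    refine ⟨!₂[b 0, b 1], fun h => ?_, fun v s => ?_⟩
    · have h0 := congrArg (· 0) h; have h1 := congrArg (· 1) h
      simp only [Fin.isValue, Matrix.cons_val_zero, PiLp.zero_apply, Matrix.cons_val_one,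
        Matrix.cons_val_fin_one] at h0 h1
      tauto
    · simpa [hfg, hb2, eta] using hmin ![v 0, v 1, s]
  · rintro ⟨u, hu, hmin⟩
    refine ⟨![u 0, u 1, 0], fun β => ?_, ?_, rfl⟩
    · simpa [hfg, eta] using hmin !₂[β 0, β 1] (β 2)
    · by_contra! h
      exact hu (by ext i; fin_cases i <;> simp_all)

lemma sin_mul_cos_nonpos_inter_Ioo :
    {θ : ℝ | sin θ * cos θ ≤ 0} ∩ Ioo (-π) π = Icc (-(π / 2)) 0 ∪ Ico (π / 2) π := by
  have hπ := pi_pos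
  ext θ
  simp only [mem_inter_iff, mem_ofPred_eq, mem_Ioo, mem_union, mem_Icc, mem_Ico]
  constructor
  · rintro ⟨h, hlo, hhi⟩
    rcases lt_or_ge θ (-(π / 2)) with hθ | hθ
    · have hsin : sin θ < 0 := sin_neg_of_neg_of_neg_pi_lt (by linarith) hlo
      have hcos : cos θ < 0 := by
        rw [← cos_neg]; exact cos_neg_of_pi_div_two_lt_of_lt (by linarith) (by linarith)
      exact absurd h (mul_pos_of_neg_of_neg hsin hcos).not_ge
    rcases le_or_gt θ 0 with hθ' | hθ'
    · exact Or.inl ⟨hθ, hθ'⟩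
    rcases lt_or_ge θ (π / 2) with hθ'' | hθ''
    · have hsin : 0 < sin θ := sin_pos_of_pos_of_lt_pi hθ' (by linarith)
      have hcos : 0 < cos θ := cos_pos_of_mem_Ioo ⟨by linarith, hθ''⟩
      exact absurd h (mul_pos hsin hcos).not_ge
    · exact Or.inr ⟨hθ'', hhi⟩
  · rintro (⟨hlo, hhi⟩ | ⟨hlo, hhi⟩)
    · refine ⟨mul_nonpos_of_nonpos_of_nonneg ?_ ?_, by linarith, by linarith⟩
      · exact sin_nonpos_of_nonpos_of_neg_pi_le hhi (by linarith)
      · exact cos_nonneg_of_mem_Icc ⟨hlo, by linarith⟩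
    · refine ⟨mul_nonpos_of_nonneg_of_nonpos ?_ ?_, by linarith, hhi⟩
      · exact sin_nonneg_of_nonneg_of_le_pi (by linarith) hhi.le
      · exact cos_nonpos_of_pi_div_two_le_of_le hlo (by linarith)

lemma volume_sin_mul_cos_nonpos_inter_Ioo :
    volume ({θ : ℝ | sin θ * cos θ ≤ 0} ∩ Ioo (-π) π) = ENNReal.ofReal π := by
  have hπ := pi_pos
  have hdisj : Disjoint (Icc (-(π / 2)) 0) (Ico (π / 2) π) :=
    Set.disjoint_left.2 fun θ h1 h2 => by linarith [h1.2, h2.1]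
  rw [sin_mul_cos_nonpos_inter_Ioo, measure_union hdisj measurableSet_Ico, volume_Icc, volume_Ico,
    ← ENNReal.ofReal_add (by linarith) (by linarith)]
  congr 1
  ring

lemma hasDerivAt_neg_mul_exp_neg_sq_div {s : ℝ} (hs : s ≠ 0) (x : ℝ) :
    HasDerivAt (fun r => -s * exp (-r ^ 2 / (2 * s))) (x * exp (-x ^ 2 / (2 * s))) x := by
  have h := ((((hasDerivAt_id' x).fun_pow 2).fun_neg.div_const (2 * s)).exp).const_mul (-s)
  refine h.congr_deriv ?_
  field_simp
  ring

lemma lintegral_Ioi_mul_exp_neg_sq_div {s c : ℝ} (hs : 0 < s) (hc : 0 ≤ c) :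
    ∫⁻ r in Ioi c, ENNReal.ofReal (r * exp (-r ^ 2 / (2 * s)))
      = ENNReal.ofReal (s * exp (-c ^ 2 / (2 * s))) := by
  have hderiv : ∀ x ∈ Ici c, HasDerivAt (fun r => -s * exp (-r ^ 2 / (2 * s)))
      (x * exp (-x ^ 2 / (2 * s))) x := fun x _ => hasDerivAt_neg_mul_exp_neg_sq_div hs.ne' x
  have hpos : ∀ x ∈ Ioi c, 0 ≤ x * exp (-x ^ 2 / (2 * s)) := fun x hx =>
    mul_nonneg (hc.trans hx.out.le) (exp_pos _).le
  have hlim : Tendsto (fun r => -s * exp (-r ^ 2 / (2 * s))) atTop (𝓝 (-s * 0)) := by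
    refine (tendsto_exp_atBot.comp ?_).const_mul _
    simp_rw [neg_div]
    exact tendsto_neg_atTop_atBot.comp
      ((tendsto_pow_atTop two_ne_zero).atTop_div_const (by positivity))
  rw [← ofReal_integral_eq_lintegral_ofReal (integrableOn_Ioi_deriv_of_nonneg' hderiv hpos hlim)
    ((ae_restrict_iff' measurableSet_Ioi).2 (ae_of_all _ hpos)),
    integral_Ioi_of_hasDerivAt_of_nonneg' hderiv hpos hlim]
  congr 1
  ring

lemma setLIntegral_complexGaussian_re_mul_im_nonpos {s c : ℝ} (hs : 0 < s) (hc : 0 ≤ c) :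
    ∫⁻ z in {z : ℂ | c < ‖z‖ ∧ z.re * z.im ≤ 0},
        ENNReal.ofReal ((2 * π * s)⁻¹ * exp (-‖z‖ ^ 2 / (2 * s)))
      = ENNReal.ofReal (exp (-c ^ 2 / (2 * s)) / 2) := by
  set Θ := {θ : ℝ | sin θ * cos θ ≤ 0}
  have hS : MeasurableSet {z : ℂ | c < ‖z‖ ∧ z.re * z.im ≤ 0} :=
    (measurableSet_lt measurable_const measurable_norm).inter
      (measurableSet_le (by fun_prop : Measurable fun z : ℂ => z.re * z.im) measurable_const)
  have hΘ : MeasurableSet Θ := measurableSet_le (by fun_prop) measurable_const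
  rw [← lintegral_indicator hS, ← Complex.lintegral_comp_polarCoord_symm]
  have polar : ∀ p ∈ polarCoord.target, ENNReal.ofReal p.1 •
      indicator {z : ℂ | c < ‖z‖ ∧ z.re * z.im ≤ 0}
        (fun z => ENNReal.ofReal ((2 * π * s)⁻¹ * exp (-‖z‖ ^ 2 / (2 * s))))
        (Complex.polarCoord.symm p)
      = indicator (Ioi c ×ˢ Θ) (fun p => ENNReal.ofReal ((2 * π * s)⁻¹) *
          ENNReal.ofReal (p.1 * exp (-p.1 ^ 2 / (2 * s)))) p := by
    rintro ⟨r, θ⟩ ⟨hr, -⟩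
    have hr : 0 < r := hr
    have hre_mul_im : (Complex.polarCoord.symm (r, θ)).re * (Complex.polarCoord.symm (r, θ)).im
        = r ^ 2 * (sin θ * cos θ) := by
      simp only [Complex.polarCoord_symm_apply, Complex.mul_re, Complex.mul_im, Complex.add_re,
        Complex.add_im, Complex.ofReal_re, Complex.ofReal_im, Complex.I_re, Complex.I_im]
      ring
    have hmem : Complex.polarCoord.symm (r, θ) ∈ {z : ℂ | c < ‖z‖ ∧ z.re * z.im ≤ 0} ↔
        (r, θ) ∈ Ioi c ×ˢ Θ := by
      rw [mem_ofPred_eq, hre_mul_im, Complex.norm_polarCoord_symm, abs_of_pos hr, mem_prod, mem_Ioi]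
      show _ ↔ c < r ∧ sin θ * cos θ ≤ 0
      have hr2 : 0 < r ^ 2 := by positivity
      exact and_congr_right' ⟨fun h => by nlinarith, fun h => by nlinarith⟩
    by_cases h : (r, θ) ∈ Ioi c ×ˢ Θ
    · rw [indicator_of_mem (hmem.2 h), indicator_of_mem h, Complex.norm_polarCoord_symm,
        abs_of_pos hr, smul_eq_mul, ← ENNReal.ofReal_mul hr.le, ← ENNReal.ofReal_mul (by positivity)]
      ring_nf
    · rw [indicator_of_notMem (mt hmem.1 h), indicator_of_notMem h, smul_zero]
  rw [setLIntegral_congr_fun polarCoord.open_target.measurableSet polar,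
    lintegral_indicator (measurableSet_Ioi.prod hΘ), Measure.restrict_restrict
      (measurableSet_Ioi.prod hΘ), polarCoord_target, prod_inter_prod,
    Ioi_inter_Ioi, sup_eq_left.2 hc, Measure.volume_eq_prod, ← Measure.prod_restrict,
    lintegral_const_mul _ (by fun_prop)]
  have hprod := lintegral_prod_mul (μ := volume.restrict (Ioi c))
    (ν := volume.restrict (Θ ∩ Ioo (-π) π)) (g := fun _ => 1)
    (f := fun r => ENNReal.ofReal (r * exp (-r ^ 2 / (2 * s)))) (by fun_prop) aemeasurable_const
  simp only [mul_one, lintegral_one, Measure.restrict_apply_univ] at hprod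
  rw [hprod, lintegral_Ioi_mul_exp_neg_sq_div hs hc,
    volume_sin_mul_cos_nonpos_inter_Ioo, ← ENNReal.ofReal_mul (by positivity),
    ← ENNReal.ofReal_mul (by positivity)]
  congr 1
  field_simp

lemma withDensity_gaussian_apply_quadrants {s c : ℝ} (hs : 0 < s) (hc : 0 ≤ c) :
    volume.withDensity (fun e : EuclideanSpace ℝ (Fin 2) =>
        ENNReal.ofReal ((2 * π * s)⁻¹ * exp (-‖e‖ ^ 2 / (2 * s))))
      {e | c < ‖e‖ ∧ e 0 * e 1 ≤ 0} = ENNReal.ofReal (exp (-c ^ 2 / (2 * s)) / 2) := by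
  set T := Complex.orthonormalBasisOneI.repr.symm
  have hset : {e : EuclideanSpace ℝ (Fin 2) | c < ‖e‖ ∧ e 0 * e 1 ≤ 0}
      = T ⁻¹' {z : ℂ | c < ‖z‖ ∧ z.re * z.im ≤ 0} := by
    ext e
    rw [mem_preimage, mem_ofPred_eq, mem_ofPred_eq, T.norm_map]
    simp [T]
  rw [withDensity_apply' _, hset, ← setLIntegral_complexGaussian_re_mul_im_nonpos hs hc,
    ← T.measurePreserving.setLIntegral_comp_preimage_emb T.toMeasurableEquiv.measurableEmbedding]
  simp only [LinearIsometryEquiv.norm_map]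

/-- in the simple example (`n = 2`, `p = 3`, groups `{1,2}`,`{3}`,
`α = 2`, `X/√2 = [[1,0,1],[0,1,1]]`, `β₀ = 0`, `ε ~ N₂(0,σ²I₂)`, `W = I`), the
probability that the group Lasso solution has exactly group 1 active equals
`(1/2)·exp(-λ²/σ²)`. -/
theorem groupLasso_example_prob_A1 (σ2 lam : ℝ) (hσ : 0 < σ2) (hlam : 0 < lam)
    (μ : Measure (EuclideanSpace ℝ (Fin 2)))
    (hμ : μ = volume.withDensity (fun e => ENNReal.ofReal
        ((2 * π * σ2)⁻¹ * Real.exp (-‖e‖ ^ 2 / (2 * σ2)))))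
    (X : Matrix (Fin 2) (Fin 3) ℝ)
    (hX : X = Real.sqrt 2 • Matrix.of ![![1, 0, 1], ![0, 1, 1]])
    (L : (Fin 2 → ℝ) → (Fin 3 → ℝ) → ℝ)
    (hL : ∀ e β, L e β = (1 / 4) * ∑ k, (e k - X.mulVec β k) ^ 2 +
        lam * (Real.sqrt ((β 0) ^ 2 + (β 1) ^ 2) + |β 2|)) :
    μ {e | ∃ b : Fin 3 → ℝ, (∀ β, L e b ≤ L e β) ∧
        (b 0 ≠ 0 ∨ b 1 ≠ 0) ∧ b 2 = 0}
      = ENNReal.ofReal ((1 / 2) * Real.exp (-lam ^ 2 / σ2)) := by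
  have hs2 : 0 < √2 := by positivity
  have hobj : ∀ (e : EuclideanSpace ℝ (Fin 2)) β,
      L e β = GroupLasso.objective lam !₂[1, 1] ((√2)⁻¹ • e) !₂[β 0, β 1] (β 2) := fun e β => by
    rw [hL, hX, GroupLasso.objective, EuclideanSpace.real_norm_sq_eq, EuclideanSpace.norm_eq]
    simp only [one_div, Matrix.mulVec, dotProduct, Matrix.smul_apply, Matrix.of_apply,
      Matrix.cons_val', Matrix.cons_val_fin_one, smul_eq_mul, Fin.sum_univ_three, Fin.isValue,
      Matrix.cons_val_zero, Matrix.cons_val_one, Matrix.cons_val, Fin.sum_univ_two, mul_one,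
      mul_zero, zero_mul, add_zero, zero_add, PiLp.sub_apply, PiLp.smul_apply, norm_eq_abs, sq_abs,
      add_left_inj]
    field_simp
    rw [Real.sq_sqrt zero_le_two]
    ring
  have hevent : {e : EuclideanSpace ℝ (Fin 2) | ∃ b : Fin 3 → ℝ, (∀ β, L e b ≤ L e β) ∧
      (b 0 ≠ 0 ∨ b 1 ≠ 0) ∧ b 2 = 0} = {e | √2 * lam < ‖e‖ ∧ e 0 * e 1 ≤ 0} := by
    ext e
    rw [mem_ofPred_eq, mem_ofPred_eq, exists_minimizer_fin_three_iff (hobj e),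
      GroupLasso.exists_ne_zero_forall_objective_le_iff hlam, real_inner_smul_left, norm_smul,
      abs_mul, Real.norm_eq_abs, abs_inv, abs_of_pos hs2, mul_le_mul_iff_right₀ (inv_pos.2 hs2),
      abs_inner_one_one_le_norm_iff, lt_inv_mul_iff₀ hs2]
  rw [hevent, hμ, withDensity_gaussian_apply_quadrants hσ (by positivity)]
  congr 1
  rw [mul_pow, Real.sq_sqrt zero_le_two]
  field_simp
end

section
/- Let α ∈ (1,∞) and let S ∈ ℝ^p satisfy the constraints ‖s_{(j)}‖_{α*} = 1 for all j in a set A with |A| ≤ n, together with Q^T s = 0 for a matrix Q ∈ ℝ^{p×(p−n)} of rank p−n whose columns are orthogonal to all vectors η(s) with ⟨η(s_{(j)}), s_{(j)}⟩ = 1 for j ∈ A. Then the constraints Q^T ds = 0 and ⟨η(s_{(j)}), ds_{(j)}⟩ = 0 (j ∈ A) are p − n + |A| linearly independent linear constraints on ds, so the solution set is a linear subspace of dimension n − |A|. -/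
/-!
The constraints are the columns of `Q` together with the vectors `η(s_{(j)})`, `j ∈ A`, extended
by zero. The latter are nonzero because `⟨η(s_{(j)}), s_{(j)}⟩ = 1`, pairwise orthogonal because
their supports are disjoint, and orthogonal to the columns of `Q`. Since the dot product is
anisotropic over an ordered field, such a family is linearly independent as soon as the columns
of `Q` are, which the rank hypothesis gives. The constraint matrix thus has rank `p - n + |A|`,
and rank–nullity yields the dimension `n - |A|` of the solution space.
-/

open Matrix Submodule

section DotProduct

variable {K m ι κ : Type*} [Fintype m]

lemma dotProduct_ite_mem [CommSemiring K] [DecidableEq m] (S : Finset m) (c x : m → K) :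
    (fun i => if i ∈ S then c i else 0) ⬝ᵥ x = ∑ i ∈ S, c i * x i := by
  simp only [dotProduct, ite_mul, zero_mul, Finset.sum_ite_mem, Finset.univ_inter]

lemma sum_smul_proj_apply [CommSemiring K] [DecidableEq m] (S : Finset m) (c x : m → K) :
    (∑ i ∈ S, c i • (LinearMap.proj i : (m → K) →ₗ[K] K)) x =
      (fun i => if i ∈ S then c i else 0) ⬝ᵥ x := by
  simp [dotProduct_ite_mem]

lemma dotProduct_ite_mem_eq_zero_of_disjoint [CommSemiring K] [DecidableEq m] {S T : Finset m}
    (hST : Disjoint S T) (a b : m → K) :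
    (fun i => if i ∈ S then a i else 0) ⬝ᵥ (fun i => if i ∈ T then b i else 0) = 0 := by
  rw [dotProduct_ite_mem]
  exact Finset.sum_eq_zero fun i hi => by
    rw [if_neg (Finset.disjoint_left.mp hST hi), mul_zero]

lemma dotProduct_eq_zero_of_mem_span [CommSemiring K] {v : ι → m → K} {w : κ → m → K}
    (h : ∀ i j, v i ⬝ᵥ w j = 0) {x y : m → K} (hx : x ∈ span K (Set.range v))
    (hy : y ∈ span K (Set.range w)) : x ⬝ᵥ y = 0 := by
  induction hx using span_induction with
  | mem x hx =>
    obtain ⟨i, rfl⟩ := hx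
    induction hy using span_induction with
    | mem y hy => obtain ⟨j, rfl⟩ := hy; exact h i j
    | zero => exact dotProduct_zero _
    | add y z _ _ hy hz => rw [dotProduct_add, hy, hz, add_zero]
    | smul a y _ hy => rw [dotProduct_smul, hy, smul_zero]
  | zero => exact zero_dotProduct _
  | add x z _ _ hx hz => rw [add_dotProduct, hx, hz, add_zero]
  | smul a x _ hx => rw [smul_dotProduct, hx, smul_zero]

variable [Field K] [LinearOrder K] [IsStrictOrderedRing K]

lemma disjoint_span_of_dotProduct_eq_zero {v : ι → m → K} {w : κ → m → K}
    (h : ∀ i j, v i ⬝ᵥ w j = 0) :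
    Disjoint (span K (Set.range v)) (span K (Set.range w)) := by
  rw [disjoint_def]
  intro x hv hw
  exact dotProduct_self_eq_zero.mp (dotProduct_eq_zero_of_mem_span h hv hw)

lemma linearIndependent_of_dotProduct_eq_zero {w : κ → m → K} (hne : ∀ j, w j ≠ 0)
    (horth : Pairwise fun j k => w j ⬝ᵥ w k = 0) : LinearIndependent K w :=
  LinearMap.BilinForm.linearIndependent_of_iIsOrtho (B := dotProductBilin K K) horth
    fun j => dotProduct_self_eq_zero.not.mpr (hne j)

lemma linearIndependent_sum_elim_of_dotProduct_eq_zero {v : ι → m → K} {w : κ → m → K}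
    (hv : LinearIndependent K v) (hne : ∀ j, w j ≠ 0)
    (horth : Pairwise fun j k => w j ⬝ᵥ w k = 0) (hvw : ∀ i j, v i ⬝ᵥ w j = 0) :
    LinearIndependent K (Sum.elim v w) :=
  hv.sum_type (linearIndependent_of_dotProduct_eq_zero hne horth)
    (disjoint_span_of_dotProduct_eq_zero hvw)

end DotProduct

namespace Matrix

variable {K m n ι κ : Type*} [Field K] [Fintype n]

lemma linearIndependent_col_of_rank_eq {A : Matrix m n K} (h : A.rank = Fintype.card n) :
    LinearIndependent K A.col := by
  rw [linearIndependent_iff_card_eq_finrank_span, Set.finrank, ← rank_eq_finrank_span_cols, h]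

lemma finrank_ker_mulVecLin_of_linearIndependent_row [Fintype m] {A : Matrix m n K}
    (h : LinearIndependent K A.row) :
    Module.finrank K (LinearMap.ker A.mulVecLin) = Fintype.card n - Fintype.card m := by
  have := LinearMap.finrank_range_add_finrank_ker A.mulVecLin
  rw [Module.finrank_fintype_fun_eq_card, ← rank, h.rank_matrix] at this
  omega

lemma ker_mulVecLin_of_sum_elim (v : ι → n → K) (w : κ → n → K) :
    LinearMap.ker (of (Sum.elim v w)).mulVecLin =
      LinearMap.ker (of v).mulVecLin ⊓ LinearMap.ker (of w).mulVecLin := by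
  ext x
  simp [funext_iff, mulVec]

end Matrix

theorem tangent_space_dimension_general (n p J : ℕ) (hnp : n ≤ p)
    (G : Fin J → Finset (Fin p))
    (hdisj : ∀ j k, j ≠ k → Disjoint (G j) (G k))
    (A : Finset (Fin J))
    (ρ : ℝ)
    (s : Fin p → ℝ)
    (Q : Matrix (Fin p) (Fin (p - n)) ℝ) (hrank : Q.rank = p - n)
    (u : Fin J → Fin p → ℝ)
    (hu : ∀ j i, u j i = if i ∈ G j then Real.sign (s i) * |s i| ^ ρ else 0)
    (hsphere : ∀ j ∈ A, ∑ i ∈ G j, (Real.sign (s i) * |s i| ^ ρ) * s i = 1)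
    (hQu : ∀ j ∈ A, Q.transpose.mulVec (u j) = 0) :
    LinearIndependent ℝ
        (Sum.elim (fun k : Fin (p - n) => (fun i => Q i k))
          (fun j : {j // j ∈ A} => u j.1)) ∧
    Module.finrank ℝ
        ↥(LinearMap.ker (Matrix.mulVecLin Q.transpose) ⊓
          ⨅ j ∈ A, LinearMap.ker
            (∑ i ∈ G j, (Real.sign (s i) * |s i| ^ ρ) •
              (LinearMap.proj i : (Fin p → ℝ) →ₗ[ℝ] ℝ)))
      = n - A.card := by
  have hu' (j : Fin J) : u j = fun i => if i ∈ G j then Real.sign (s i) * |s i| ^ ρ else 0 :=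
    funext (hu j)
  have hcols : LinearIndependent ℝ Q.col :=
    linearIndependent_col_of_rank_eq (by rw [hrank, Fintype.card_fin])
  have hne (j : A) : u j ≠ 0 := fun h0 => by
    have h1 := hsphere j j.2
    rw [← dotProduct_ite_mem, ← hu', h0, zero_dotProduct] at h1
    exact zero_ne_one h1
  have horth : Pairwise fun j k : A => u j ⬝ᵥ u k = 0 := fun j k hjk => by
    change u j ⬝ᵥ u k = 0
    rw [hu', hu']
    exact dotProduct_ite_mem_eq_zero_of_disjoint (hdisj j k (Subtype.coe_injective.ne hjk)) _ _
  have hQu' (k : Fin (p - n)) (j : A) : Q.col k ⬝ᵥ u j = 0 := congrFun (hQu j j.2) k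
  have hLI := linearIndependent_sum_elim_of_dotProduct_eq_zero hcols hne horth hQu'
  refine ⟨hLI, ?_⟩
  have hker : LinearMap.ker (of (Sum.elim Q.col fun j : A => u j)).mulVecLin =
      LinearMap.ker (Matrix.mulVecLin Q.transpose) ⊓
        ⨅ j ∈ A, LinearMap.ker (∑ i ∈ G j, (Real.sign (s i) * |s i| ^ ρ) •
          (LinearMap.proj i : (Fin p → ℝ) →ₗ[ℝ] ℝ)) := by
    rw [ker_mulVecLin_of_sum_elim]
    congr 1
    ext x
    simp [Submodule.mem_iInf, funext_iff, mulVec, sum_smul_proj_apply, hu']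
  rw [← hker, finrank_ker_mulVecLin_of_linearIndependent_row
    (A := of (Sum.elim Q.col fun j : A => u j)) hLI]
  simp only [Fintype.card_fin, Fintype.card_sum, Fintype.card_coe]
  omega

/-- the constraints `Qᵀds = 0` and `⟨η(s_{(j)}), ds_{(j)}⟩ = 0`
(`j ∈ A`) are `p - n + |A|` linearly independent linear constraints on `ds`, so
their solution set is a linear subspace of dimension `n - |A|`. -/
theorem tangent_space_dimension (n p J : ℕ) (hnp : n ≤ p)
    (G : Fin J → Finset (Fin p))
    (hdisj : ∀ j k, j ≠ k → Disjoint (G j) (G k))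
    (A : Finset (Fin J)) (hA : A.card ≤ n)
    (α αs ρ : ℝ) (hα : 1 < α) (hconj : 1 / α + 1 / αs = 1) (hρ : ρ = αs / α)
    (s : Fin p → ℝ)
    (Q : Matrix (Fin p) (Fin (p - n)) ℝ) (hrank : Q.rank = p - n)
    (hQs : Q.transpose.mulVec s = 0)
    (u : Fin J → Fin p → ℝ)
    (hu : ∀ j i, u j i = if i ∈ G j then Real.sign (s i) * |s i| ^ ρ else 0)
    (hsphere : ∀ j ∈ A, ∑ i ∈ G j, (Real.sign (s i) * |s i| ^ ρ) * s i = 1)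
    (hQu : ∀ j ∈ A, Q.transpose.mulVec (u j) = 0) :
    LinearIndependent ℝ
        (Sum.elim (fun k : Fin (p - n) => (fun i => Q i k))
          (fun j : {j // j ∈ A} => u j.1)) ∧
    Module.finrank ℝ
        ↥(LinearMap.ker (Matrix.mulVecLin Q.transpose) ⊓
          ⨅ j ∈ A, LinearMap.ker
            (∑ i ∈ G j, (Real.sign (s i) * |s i| ^ ρ) •
              (LinearMap.proj i : (Fin p → ℝ) →ₗ[ℝ] ℝ)))
      = n - A.card :=
  tangent_space_dimension_general n p J hnp G hdisj A ρ s Q hrank u hu hsphere hQu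
end
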